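/- Let T be a bounded linear operator on a complex Hilbert space H. Then ω²(T) ≤ (1/2) ω([[O, (3/2)(T* T + T T*)],[T², O]]), where ω² denotes the square of the numerical radius. -/

import Mathlib

open ContinuousLinearMap

/-- The numerical radius of a bounded linear operator on a complex inner product space:
`ω(T) = sup_{‖x‖ = 1} |⟨Tx, x⟩|`. -/
noncomputable def numRadius {H : Type*} [NormedAddCommGroup H] [InnerProductSpace ℂ H]
    (T : H →L[ℂ] H) : ℝ :=
  ⨆ x : {x : H // ‖x‖ = 1}, ‖(inner ℂ (T x) (x : H) : ℂ)‖

/-- The operator matrix `[[O, A], [B, O]]` acting on the Hilbert space direct sum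
`H ⊕ H`, sending `(x, y)` to `(A y, B x)`. -/
noncomputable def offDiagOp {H : Type*} [NormedAddCommGroup H] [InnerProductSpace ℂ H]
    (A B : H →L[ℂ] H) : WithLp 2 (H × H) →L[ℂ] WithLp 2 (H × H) :=
  (((WithLp.prodContinuousLinearEquiv 2 ℂ H H).symm :
        (H × H) →L[ℂ] WithLp 2 (H × H)).comp
      ((A.comp (ContinuousLinearMap.snd ℂ H H)).prod
        (B.comp (ContinuousLinearMap.fst ℂ H H)))).comp
    ((WithLp.prodContinuousLinearEquiv 2 ℂ H H : WithLp 2 (H × H) ≃L[ℂ] H × H) :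
      WithLp 2 (H × H) →L[ℂ] H × H)

/-!
For a unit vector `x` put `a = ⟪T x, x⟫`. Splitting `T x` and `T† x` into their components
along `x` and orthogonal to `x`, the identity `⟪T² x, x⟫ = ⟪T x, T† x⟫` and Cauchy–Schwarz on the
orthogonal parts give `2|a|² ≤ |⟪T² x, x⟫| + (‖T x‖² + ‖T† x‖²) / 2`, while `|a| ≤ ‖T x‖, ‖T† x‖`
gives `2|a|² ≤ ‖T x‖² + ‖T† x‖²`. Adding, `4|a|² ≤ |⟪T² x, x⟫| + |⟪A x, x⟫|`, since
`A = (3/2)(T†T + TT†)` has `⟪A x, x⟫ = (3/2)(‖T x‖² + ‖T† x‖²)`. Finally, testing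
`[[O, A], [B, O]]` on `(ζ x, x)` for a suitable unimodular `ζ` aligns the phases of `⟪A x, x⟫`
and `⟪B x, x⟫`, so `|⟪A x, x⟫| + |⟪B x, x⟫|` is at most twice its numerical radius.
-/

open ComplexConjugate
open scoped InnerProductSpace

section UnitVector

variable {𝕜 E : Type*} [RCLike 𝕜] [NormedAddCommGroup E] [InnerProductSpace 𝕜 E] {x : E}

theorem inner_sub_inner_smul_sub_inner_smul (hx : ‖x‖ = 1) (u v : E) :
    ⟪u - ⟪x, u⟫_𝕜 • x, v - ⟪x, v⟫_𝕜 • x⟫_𝕜 = ⟪u, v⟫_𝕜 - ⟪u, x⟫_𝕜 * ⟪x, v⟫_𝕜 := by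
  have hxx : ⟪x, x⟫_𝕜 = 1 := by simp [inner_self_eq_norm_sq_to_K, hx]
  simp only [inner_sub_left, inner_sub_right, inner_smul_left, inner_smul_right, inner_conj_symm,
    hxx]
  ring

theorem norm_sub_inner_smul_sq (hx : ‖x‖ = 1) (u : E) :
    ‖u - ⟪x, u⟫_𝕜 • x‖ ^ 2 = ‖u‖ ^ 2 - ‖⟪x, u⟫_𝕜‖ ^ 2 := by
  have h := inner_sub_inner_smul_sub_inner_smul (𝕜 := 𝕜) hx u u
  rw [inner_self_eq_norm_sq_to_K, inner_self_eq_norm_sq_to_K, ← inner_conj_symm x u,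
    RCLike.mul_conj] at h
  rw [← inner_conj_symm x u, RCLike.norm_conj]
  exact_mod_cast h

theorem norm_inner_mul_inner_add_le (hx : ‖x‖ = 1) (u v : E) :
    ‖⟪u, x⟫_𝕜 * ⟪x, v⟫_𝕜‖ + (‖⟪x, u⟫_𝕜‖ ^ 2 + ‖⟪x, v⟫_𝕜‖ ^ 2) / 2 ≤
      ‖⟪u, v⟫_𝕜‖ + (‖u‖ ^ 2 + ‖v‖ ^ 2) / 2 := by
  set u' := u - ⟪x, u⟫_𝕜 • x
  set v' := v - ⟪x, v⟫_𝕜 • x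
  have hu' := norm_sub_inner_smul_sq (𝕜 := 𝕜) hx u
  have hv' := norm_sub_inner_smul_sq (𝕜 := 𝕜) hx v
  have h : ⟪u, x⟫_𝕜 * ⟪x, v⟫_𝕜 = ⟪u, v⟫_𝕜 - ⟪u', v'⟫_𝕜 := by
    rw [inner_sub_inner_smul_sub_inner_smul hx]; ring
  have hcs : ‖⟪u', v'⟫_𝕜‖ ≤ (‖u'‖ ^ 2 + ‖v'‖ ^ 2) / 2 :=
    (norm_inner_le_norm u' v').trans (by nlinarith [sq_nonneg (‖u'‖ - ‖v'‖)])
  have := norm_sub_le ⟪u, v⟫_𝕜 ⟪u', v'⟫_𝕜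
  rw [h]
  linarith

end UnitVector

section Operator

variable {𝕜 E : Type*} [RCLike 𝕜] [NormedAddCommGroup E] [InnerProductSpace 𝕜 E] [CompleteSpace E]

theorem four_mul_norm_inner_apply_sq_le (T : E →L[𝕜] E) {x : E} (hx : ‖x‖ = 1) :
    4 * ‖⟪T x, x⟫_𝕜‖ ^ 2 ≤ ‖⟪T (T x), x⟫_𝕜‖ + 3 / 2 * (‖T x‖ ^ 2 + ‖adjoint T x‖ ^ 2) := by
  have h := norm_inner_mul_inner_add_le (𝕜 := 𝕜) hx (adjoint T x) (T x)
  rw [adjoint_inner_left, adjoint_inner_left, adjoint_inner_right, norm_mul,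
    norm_inner_symm x (T (T x)), norm_inner_symm x (T x)] at h
  have hT : ‖⟪T x, x⟫_𝕜‖ ≤ ‖T x‖ := by
    simpa [hx] using norm_inner_le_norm (𝕜 := 𝕜) (T x) x
  have hT' : ‖⟪T x, x⟫_𝕜‖ ≤ ‖adjoint T x‖ := by
    simpa [hx, adjoint_inner_right] using norm_inner_le_norm (𝕜 := 𝕜) x (adjoint T x)
  nlinarith [norm_nonneg ⟪T x, x⟫_𝕜]

theorem inner_adjoint_comp_add_comp_adjoint_apply (T : E →L[𝕜] E) (x : E) :
    ⟪(adjoint T ∘L T + T ∘L adjoint T) x, x⟫_𝕜 = ((‖T x‖ ^ 2 + ‖adjoint T x‖ ^ 2 : ℝ) : 𝕜) := by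
  rw [add_apply, comp_apply, comp_apply, inner_add_left, adjoint_inner_left,
    ← adjoint_inner_right T (adjoint T x) x, inner_self_eq_norm_sq_to_K,
    inner_self_eq_norm_sq_to_K]
  push_cast
  ring

end Operator

section NumRadius

variable {H : Type*} [NormedAddCommGroup H] [InnerProductSpace ℂ H]

theorem numRadius_nonneg (T : H →L[ℂ] H) : 0 ≤ numRadius T :=
  Real.iSup_nonneg fun _ => norm_nonneg _

theorem numRadius_le {T : H →L[ℂ] H} {c : ℝ} (hc : 0 ≤ c)
    (h : ∀ x : H, ‖x‖ = 1 → ‖⟪T x, x⟫_ℂ‖ ≤ c) : numRadius T ≤ c :=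
  Real.iSup_le (fun x => h x x.2) hc

theorem norm_inner_apply_le_numRadius (T : H →L[ℂ] H) {x : H} (hx : ‖x‖ = 1) :
    ‖⟪T x, x⟫_ℂ‖ ≤ numRadius T := by
  refine le_ciSup (f := fun x : {x : H // ‖x‖ = 1} => ‖⟪T x, (x : H)⟫_ℂ‖) ⟨‖T‖, ?_⟩ ⟨x, hx⟩
  rintro _ ⟨⟨y, hy⟩, rfl⟩
  simpa [hy] using (norm_inner_le_norm (𝕜 := ℂ) (T y) y).trans
    (mul_le_mul_of_nonneg_right (T.le_opNorm y) (norm_nonneg y))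

theorem norm_inner_apply_le_numRadius_mul_sq (T : H →L[ℂ] H) (x : H) :
    ‖⟪T x, x⟫_ℂ‖ ≤ numRadius T * ‖x‖ ^ 2 := by
  rcases eq_or_ne x 0 with rfl | hx
  · simp
  have h := norm_inner_apply_le_numRadius T (norm_smul_inv_norm (𝕜 := ℂ) hx)
  rw [map_smul, inner_smul_left, inner_smul_right, norm_mul, norm_mul, RCLike.norm_conj] at h
  simp only [RCLike.norm_ofReal, norm_inv, abs_norm] at h
  rwa [← mul_assoc, ← sq, inv_pow, inv_mul_le_iff₀ (by positivity), mul_comm] at h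

end NumRadius

theorem Complex.exists_norm_eq_one_norm_mul_add_conj_mul_eq (p q : ℂ) :
    ∃ ζ : ℂ, ‖ζ‖ = 1 ∧ ‖ζ * p + conj ζ * q‖ = ‖p‖ + ‖q‖ := by
  refine ⟨exp (((q.arg - p.arg) / 2 : ℝ) * I), norm_exp_ofReal_mul_I _, ?_⟩
  have hp : ((q.arg - p.arg) / 2 : ℝ) * I + p.arg * I = ((p.arg + q.arg) / 2 : ℝ) * I := by
    push_cast; ring
  have hq : ((q.arg - p.arg) / 2 : ℝ) * -I + q.arg * I = ((p.arg + q.arg) / 2 : ℝ) * I := by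
    push_cast; ring
  have h : exp (((q.arg - p.arg) / 2 : ℝ) * I) * p +
      conj (exp (((q.arg - p.arg) / 2 : ℝ) * I)) * q =
      ((‖p‖ + ‖q‖ : ℝ) : ℂ) * exp (((p.arg + q.arg) / 2 : ℝ) * I) :=
    calc _ = exp (((q.arg - p.arg) / 2 : ℝ) * I) * (‖p‖ * exp (p.arg * I)) +
          exp (((q.arg - p.arg) / 2 : ℝ) * -I) * (‖q‖ * exp (q.arg * I)) := by
          rw [norm_mul_exp_arg_mul_I, norm_mul_exp_arg_mul_I, ← exp_conj, map_mul, conj_ofReal,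
            conj_I]
      _ = ‖p‖ * exp (((q.arg - p.arg) / 2 : ℝ) * I + p.arg * I) +
          ‖q‖ * exp (((q.arg - p.arg) / 2 : ℝ) * -I + q.arg * I) := by
          rw [exp_add, exp_add]; ring
      _ = _ := by rw [hp, hq]; push_cast; ring
  rw [h, norm_mul, norm_exp_ofReal_mul_I, mul_one, norm_real, Real.norm_of_nonneg (by positivity)]

section OffDiag

variable {H : Type*} [NormedAddCommGroup H] [InnerProductSpace ℂ H]

theorem offDiagOp_toLp (A B : H →L[ℂ] H) (x y : H) :
    offDiagOp A B (WithLp.toLp 2 (x, y)) = WithLp.toLp 2 (A y, B x) :=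
  rfl

theorem norm_inner_add_norm_inner_le_two_mul_numRadius_offDiagOp (A B : H →L[ℂ] H) (x : H) :
    ‖⟪A x, x⟫_ℂ‖ + ‖⟪B x, x⟫_ℂ‖ ≤ 2 * numRadius (offDiagOp A B) * ‖x‖ ^ 2 := by
  obtain ⟨ζ, hζ, hsum⟩ :=
    Complex.exists_norm_eq_one_norm_mul_add_conj_mul_eq ⟪A x, x⟫_ℂ ⟪B x, x⟫_ℂ
  set u : WithLp 2 (H × H) := WithLp.toLp 2 (ζ • x, x)
  have hu : ‖u‖ ^ 2 = 2 * ‖x‖ ^ 2 := by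
    rw [WithLp.prod_norm_sq_eq_of_L2]
    simp [u, norm_smul, hζ]
    ring
  have hinner : ⟪offDiagOp A B u, u⟫_ℂ = ζ * ⟪A x, x⟫_ℂ + conj ζ * ⟪B x, x⟫_ℂ := by
    rw [WithLp.prod_inner_apply, offDiagOp_toLp]
    simp [u, inner_smul_left, inner_smul_right]
  have := norm_inner_apply_le_numRadius_mul_sq (offDiagOp A B) u
  rw [hinner, hsum, hu] at this
  linarith

end OffDiag

theorem numRadius_sq_le_half_numRadius_offDiag
    {H : Type*} [NormedAddCommGroup H] [InnerProductSpace ℂ H] [CompleteSpace H]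
    (T : H →L[ℂ] H) :
    numRadius T ^ 2 ≤
      (1 / 2) * numRadius (offDiagOp
        (((3 : ℂ) / 2) • (adjoint T ∘L T + T ∘L adjoint T))
        (T ∘L T)) := by
  set A := ((3 : ℂ) / 2) • (adjoint T ∘L T + T ∘L adjoint T)
  have hω := numRadius_nonneg (offDiagOp A (T ∘L T))
  have key (x : H) (hx : ‖x‖ = 1) :
      ‖⟪T x, x⟫_ℂ‖ ^ 2 ≤ 1 / 2 * numRadius (offDiagOp A (T ∘L T)) := by
    have hA : ‖⟪A x, x⟫_ℂ‖ = 3 / 2 * (‖T x‖ ^ 2 + ‖adjoint T x‖ ^ 2) := by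
      rw [smul_apply, inner_smul_left, inner_adjoint_comp_add_comp_adjoint_apply, norm_mul,
        RCLike.norm_conj, RCLike.norm_ofReal, abs_of_nonneg (by positivity)]
      norm_num
    have := norm_inner_add_norm_inner_le_two_mul_numRadius_offDiagOp A (T ∘L T) x
    rw [hA, comp_apply, hx] at this
    linarith [four_mul_norm_inner_apply_sq_le T hx]
  rw [← Real.le_sqrt (numRadius_nonneg T) (by positivity)]
  exact numRadius_le (Real.sqrt_nonneg _) fun x hx =>
    (Real.le_sqrt (norm_nonneg _) (by positivity)).2 (key x hx)
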